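/- Let h be a normalized gamma random variable with integer shape m and rate m, and let η = m·(m!)^{-1/m}. Then for all x ≥ 0, the approximation bound holds: (1 - e^{-ηx})^m ≤ P(h < x) (a lower bound on the CDF), i.e., P(h ≥ x) ≤ 1 - (1 - e^{-ηx})^m. -/

import Mathlib

open MeasureTheory Set Real Filter Topology

noncomputable def ngEta (m : ℕ) : ℝ := (m : ℝ) * ((Nat.factorial m : ℝ) ^ (-(1 : ℝ) / m))
noncomputable def ngF (m : ℕ) (t : ℝ) : ℝ :=
  (m : ℝ) ^ m * t ^ (m - 1) * Real.exp (-(m : ℝ) * t) / (Nat.factorial (m - 1))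
noncomputable def ngG (m : ℕ) (x : ℝ) : ℝ := (1 - Real.exp (-(ngEta m) * x)) ^ m
noncomputable def ngGp (m : ℕ) (x : ℝ) : ℝ :=
  (m : ℝ) * ngEta m * Real.exp (-(ngEta m) * x) * (1 - Real.exp (-(ngEta m) * x)) ^ (m - 1)
noncomputable def ngPsi (m : ℕ) (x : ℝ) : ℝ :=
  ((m : ℝ) - 1) * (Real.log x - Real.log (1 - Real.exp (-(ngEta m) * x)))
    + (ngEta m - m) * x + ((m : ℝ) - 1) * Real.log (ngEta m)
lemma ngEta_pos {m : ℕ} (hm : 1 ≤ m) : 0 < ngEta m := by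
  have : (0:ℝ) < m := by exact_mod_cast hm
  unfold ngEta
  positivity
lemma ngE_lt_one {m : ℕ} (hm : 1 ≤ m) {x : ℝ} (hx : 0 < x) :
    Real.exp (-(ngEta m) * x) < 1 := by
  rw [Real.exp_lt_one_iff]
  have := ngEta_pos hm
  nlinarith
lemma ngOneSubE_pos {m : ℕ} (hm : 1 ≤ m) {x : ℝ} (hx : 0 < x) :
    0 < 1 - Real.exp (-(ngEta m) * x) := by
  linarith [ngE_lt_one hm hx]
lemma ngF_pos {m : ℕ} (hm : 1 ≤ m) {t : ℝ} (ht : 0 < t) : 0 < ngF m t := by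
  have h1 : (0:ℝ) < m := by exact_mod_cast hm
  unfold ngF
  positivity
lemma ngGp_pos {m : ℕ} (hm : 1 ≤ m) {x : ℝ} (hx : 0 < x) : 0 < ngGp m x := by
  have h1 : (0:ℝ) < m := by exact_mod_cast hm
  have h2 := ngEta_pos hm
  have h3 := ngOneSubE_pos hm hx
  unfold ngGp
  positivity
lemma ngEta_pow {m : ℕ} (hm : 1 ≤ m) :
    (ngEta m) ^ m = (m:ℝ) ^ m / (Nat.factorial m) := by
  have hf : (0:ℝ) < (Nat.factorial m : ℝ) := by exact_mod_cast m.factorial_pos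
  have hm0 : (m:ℝ) ≠ 0 := by positivity
  unfold ngEta
  rw [mul_pow, ← Real.rpow_natCast ((Nat.factorial m : ℝ) ^ (-(1 : ℝ) / m)) m,
    ← Real.rpow_mul hf.le]
  rw [div_mul_cancel₀ _ hm0, Real.rpow_neg_one]
  ring
lemma ngDeriv_inner {m : ℕ} (x : ℝ) :
    HasDerivAt (fun x : ℝ => 1 - Real.exp (-(ngEta m) * x))
      (ngEta m * Real.exp (-(ngEta m) * x)) x := by
  have h := (((hasDerivAt_id x).const_mul (-(ngEta m))).exp).const_sub 1
  refine h.congr_deriv ?_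
  simp only [id_eq, mul_one]; ring
lemma ngDeriv_g {m : ℕ} (x : ℝ) : HasDerivAt (ngG m) (ngGp m x) x := by
  unfold ngG ngGp
  have h2 := (ngDeriv_inner (m := m) x).pow m
  refine h2.congr_deriv ?_
  ring

noncomputable def ngPsi' (m : ℕ) (x : ℝ) : ℝ :=
  ((m : ℝ) - 1) * (x⁻¹ - ngEta m * Real.exp (-(ngEta m) * x) / (1 - Real.exp (-(ngEta m) * x)))
    + (ngEta m - m)

lemma exp_m1_log {m : ℕ} (hm : 1 ≤ m) {a : ℝ} (ha : 0 < a) :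
    Real.exp (((m:ℝ) - 1) * Real.log a) = a ^ (m - 1) := by
  rw [mul_comm, ← Real.rpow_def_of_pos ha]
  rw [show ((m:ℝ) - 1) = ((m - 1 : ℕ) : ℝ) by
    push_cast [Nat.cast_sub hm]; ring]
  exact Real.rpow_natCast a (m-1)
lemma ngF_eq_exp_psi_mul {m : ℕ} (hm : 1 ≤ m) {x : ℝ} (hx : 0 < x) :
    ngF m x = Real.exp (ngPsi m x) * ngGp m x := by
  have hη := ngEta_pos hm
  have h1E := ngOneSubE_pos hm hx
  have hfac : ((m-1).factorial : ℝ) ≠ 0 := by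
    exact_mod_cast (m-1).factorial_pos.ne'
  have hmf : (m:ℝ) * ((m-1).factorial : ℝ) = (m.factorial : ℝ) := by
    exact_mod_cast Nat.mul_factorial_pred (by omega)
  have epsi : Real.exp (ngPsi m x)
      = x ^ (m-1) * ((1 - Real.exp (-(ngEta m) * x)) ^ (m-1))⁻¹
        * Real.exp ((ngEta m - m) * x) * (ngEta m) ^ (m-1) := by
    unfold ngPsi
    rw [mul_sub, sub_eq_add_neg (((m:ℝ)-1) * Real.log x)]
    rw [Real.exp_add, Real.exp_add, Real.exp_add, Real.exp_neg]
    rw [exp_m1_log hm hx, exp_m1_log hm h1E, exp_m1_log hm hη]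
  rw [epsi]
  unfold ngF ngGp
  have hEE : Real.exp ((ngEta m - m) * x) * Real.exp (-(ngEta m) * x)
      = Real.exp (-(m:ℝ) * x) := by
    rw [← Real.exp_add]; ring_nf
  have hpow : (ngEta m) ^ (m-1) * ngEta m = (ngEta m) ^ m := by
    rw [← pow_succ]; congr 1; omega
  have h1Epow : ((1 - Real.exp (-(ngEta m) * x)) ^ (m-1)) ≠ 0 := by positivity
  have hQ : ((m:ℝ))^m = ngEta m ^ m * (m.factorial : ℝ) := by
    rw [ngEta_pow hm]
    field_simp
  field_simp
  simp only [neg_mul] at *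
  rw [mul_comm x (ngEta m), mul_comm x (ngEta m - m), eq_div_iff h1Epow, ← hEE, hQ, ← hpow, ← hmf]
  ring

lemma ngDeriv_psi {m : ℕ} (hm : 1 ≤ m) {x : ℝ} (hx : 0 < x) :
    HasDerivAt (ngPsi m) (ngPsi' m x) x := by
  have h1 : HasDerivAt Real.log x⁻¹ x := Real.hasDerivAt_log hx.ne'
  have h2 : HasDerivAt (fun x : ℝ => Real.log (1 - Real.exp (-(ngEta m) * x)))
      (ngEta m * Real.exp (-(ngEta m) * x) / (1 - Real.exp (-(ngEta m) * x))) x :=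
    (ngDeriv_inner x).log (ngOneSubE_pos hm hx).ne'
  have h3 := ((h1.sub h2).const_mul ((m : ℝ) - 1)).add
    (((hasDerivAt_id x).const_mul (ngEta m - m)))
  have h4 := h3.add_const (((m : ℝ) - 1) * Real.log (ngEta m))
  unfold ngPsi ngPsi'
  refine h4.congr_deriv ?_
  ring
lemma ngDeriv_psi' {m : ℕ} (hm : 1 ≤ m) {x : ℝ} (hx : 0 < x) :
    HasDerivAt (ngPsi' m)
      (((m : ℝ) - 1) * (-(x^2)⁻¹ + (ngEta m)^2 * Real.exp (-(ngEta m) * x)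
        / (1 - Real.exp (-(ngEta m) * x))^2)) x := by
  have h1E := ngOneSubE_pos hm hx
  have h1 : HasDerivAt (fun x : ℝ => x⁻¹) (-(x^2)⁻¹) x := by
    simpa using hasDerivAt_inv hx.ne'
  have hnum : HasDerivAt (fun x : ℝ => ngEta m * Real.exp (-(ngEta m) * x))
      (-(ngEta m)^2 * Real.exp (-(ngEta m) * x)) x := by
    have := (((hasDerivAt_id x).const_mul (-(ngEta m))).exp).const_mul (ngEta m)
    refine this.congr_deriv ?_
    simp only [id_eq, mul_one]; ring
  have h2 : HasDerivAt (fun x : ℝ => ngEta m * Real.exp (-(ngEta m) * x)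
      / (1 - Real.exp (-(ngEta m) * x)))
      (-(ngEta m)^2 * Real.exp (-(ngEta m) * x) / (1 - Real.exp (-(ngEta m) * x))^2) x := by
    have := hnum.div (ngDeriv_inner x) h1E.ne'
    refine this.congr_deriv ?_
    have hne : (1 - rexp (-ngEta m * x)) ^ 2 ≠ 0 := by positivity
    field_simp
    ring
  have h3 := ((h1.sub h2).const_mul ((m : ℝ) - 1)).add_const (ngEta m - (m:ℝ))
  unfold ngPsi'
  refine h3.congr_deriv ?_
  ring
lemma ng_key_ineq {m : ℕ} (hm : 1 ≤ m) {x : ℝ} (hx : 0 < x) :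
    (ngEta m)^2 * x^2 * Real.exp (-(ngEta m) * x)
      ≤ (1 - Real.exp (-(ngEta m) * x))^2 := by
  have hη := ngEta_pos hm
  set y := ngEta m * x with hy
  have hy0 : 0 < y := mul_pos hη hx
  have hs : y / 2 < Real.sinh (y / 2) := Real.self_lt_sinh_iff.mpr (by linarith)
  rw [Real.sinh_eq] at hs
  have hE2 : Real.exp (-y/2) * Real.exp (-y/2) = Real.exp (-y) := by
    rw [← Real.exp_add]; ring_nf
  have hE2' : Real.exp (y/2) * Real.exp (-y/2) = 1 := by
    rw [← Real.exp_add]; ring_nf; exact Real.exp_zero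
  have hneg : Real.exp (-(y/2)) = Real.exp (-y/2) := by ring_nf
  rw [hneg] at hs
  have h5 : 0 < Real.exp (y/2) - Real.exp (-y/2) - y := by linarith
  have hkey : y * Real.exp (-y/2) < 1 - Real.exp (-y) := by
    nlinarith [mul_pos h5 (Real.exp_pos (-y/2)), Real.exp_pos (-y/2)]
  have hsq := mul_self_le_mul_self (by positivity : (0:ℝ) ≤ y * Real.exp (-y/2)) hkey.le
  have hid : (y * Real.exp (-y/2)) * (y * Real.exp (-y/2)) = y^2 * Real.exp (-y) := by
    rw [show (y * Real.exp (-y/2)) * (y * Real.exp (-y/2))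
      = y^2 * (Real.exp (-y/2) * Real.exp (-y/2)) by ring, hE2]
  rw [hid] at hsq
  have hthis : -(ngEta m) * x = -y := by rw [hy]; ring
  rw [hthis, show (ngEta m)^2 * x^2 = y^2 by rw [hy]; ring, pow_two]
  linarith
lemma ngPsi'_deriv_nonpos {m : ℕ} (hm : 1 ≤ m) {x : ℝ} (hx : 0 < x) :
    ((m : ℝ) - 1) * (-(x^2)⁻¹ + (ngEta m)^2 * Real.exp (-(ngEta m) * x)
      / (1 - Real.exp (-(ngEta m) * x))^2) ≤ 0 := by
  have h1E := ngOneSubE_pos hm hx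
  have hm1 : (0:ℝ) ≤ (m:ℝ) - 1 := by
    have : (1:ℝ) ≤ m := by exact_mod_cast hm
    linarith
  have hkey := ng_key_ineq hm hx
  have h2 : (ngEta m)^2 * Real.exp (-(ngEta m) * x) / (1 - Real.exp (-(ngEta m) * x))^2
      ≤ (x^2)⁻¹ := by
    rw [div_le_iff₀ (by positivity)]
    rw [inv_mul_eq_div, le_div_iff₀ (by positivity)]
    nlinarith
  apply mul_nonpos_of_nonneg_of_nonpos hm1
  linarith
lemma ngPsi_concave {m : ℕ} (hm : 1 ≤ m) : ConcaveOn ℝ (Ioi 0) (ngPsi m) := by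
  have hdiff : ∀ x ∈ Ioi (0:ℝ), HasDerivAt (ngPsi m) (ngPsi' m x) x :=
    fun x hx => ngDeriv_psi hm hx
  have hderiv_eq : Set.EqOn (deriv (ngPsi m)) (ngPsi' m) (Ioi 0) :=
    fun x hx => (hdiff x hx).deriv
  have hanti : AntitoneOn (ngPsi' m) (Ioi 0) := by
    apply antitoneOn_of_deriv_nonpos (convex_Ioi 0)
    · exact fun x hx => ((ngDeriv_psi' hm hx).continuousAt).continuousWithinAt
    · intro x hx
      rw [interior_Ioi] at hx
      exact (ngDeriv_psi' hm hx).differentiableAt.differentiableWithinAt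
    · intro x hx
      rw [interior_Ioi] at hx
      rw [(ngDeriv_psi' hm hx).deriv]
      exact ngPsi'_deriv_nonpos hm hx
  apply AntitoneOn.concaveOn_of_deriv (convex_Ioi 0)
  · exact fun x hx => (hdiff x hx).continuousAt.continuousWithinAt
  · intro x hx
    rw [interior_Ioi] at hx
    exact (hdiff x hx).differentiableAt.differentiableWithinAt
  · rw [interior_Ioi]
    exact hanti.congr (fun x hx => (hderiv_eq hx).symm)

lemma ngRatio_tendsto {m : ℕ} (hm : 1 ≤ m) :
    Tendsto (fun x => (1 - Real.exp (-(ngEta m) * x)) / (ngEta m * x))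
      (𝓝[>] (0:ℝ)) (𝓝 1) := by
  have hη := ngEta_pos hm
  have h := (ngDeriv_inner (m := m) 0)
  rw [hasDerivAt_iff_tendsto_slope] at h
  simp only [mul_zero, Real.exp_zero, mul_one] at h
  have h2 : Tendsto (fun x : ℝ => (1 - Real.exp (-(ngEta m) * x)) / x)
      (𝓝[≠] (0:ℝ)) (𝓝 (ngEta m)) := by
    apply h.congr'
    filter_upwards [self_mem_nhdsWithin] with x hx
    simp only [slope_def_field, mem_compl_iff, mem_singleton_iff] at *
    rw [mul_zero, Real.exp_zero]
    field_simp
    ring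
  have h3 := h2.const_mul (ngEta m)⁻¹
  rw [inv_mul_cancel₀ hη.ne'] at h3
  have h4 := h3.mono_left (nhdsWithin_mono _ (fun x hx => ne_of_gt hx))
  apply h4.congr
  intro x
  field_simp
lemma ngPsi_tendsto_zero {m : ℕ} (hm : 1 ≤ m) :
    Tendsto (ngPsi m) (𝓝[>] (0:ℝ)) (𝓝 0) := by
  have hη := ngEta_pos hm
  have h1 : Tendsto (fun x => Real.log ((1 - Real.exp (-(ngEta m) * x)) / (ngEta m * x)))
      (𝓝[>] (0:ℝ)) (𝓝 0) := by
    have := (Real.continuousAt_log one_ne_zero).tendsto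
    rw [Real.log_one] at this
    exact this.comp (ngRatio_tendsto hm)
  have h2 : Tendsto (fun x : ℝ => (ngEta m - m) * x) (𝓝[>] (0:ℝ)) (𝓝 0) := by
    have : Tendsto (fun x : ℝ => (ngEta m - m) * x) (𝓝 (0:ℝ)) (𝓝 ((ngEta m - m) * 0)) :=
      (continuous_const.mul continuous_id).tendsto 0
    rw [mul_zero] at this
    exact this.mono_left nhdsWithin_le_nhds
  have h3 := (h1.neg.const_mul ((m:ℝ) - 1)).add h2
  rw [neg_zero, mul_zero, add_zero] at h3
  apply h3.congr'
  filter_upwards [self_mem_nhdsWithin] with x hx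
  have hx : (0:ℝ) < x := hx
  have h1E := ngOneSubE_pos hm hx
  rw [Real.log_div h1E.ne' (by positivity), Real.log_mul hη.ne' hx.ne']
  unfold ngPsi
  ring
lemma ngPsi_crossing {m : ℕ} (hm : 1 ≤ m) {x y : ℝ} (hx : 0 < x) (hxy : x < y)
    (hy : 0 ≤ ngPsi m y) : 0 ≤ ngPsi m x := by
  have hy0 : 0 < y := hx.trans hxy
  have hcc := ngPsi_concave (m := m) hm
  have key : ∀ t ∈ Ioo (0:ℝ) x, (y - x) / (y - t) * ngPsi m t ≤ ngPsi m x := by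
    intro t ht
    obtain ⟨ht0, htx⟩ := ht
    have hty : t < y := htx.trans hxy
    have hyt : 0 < y - t := by linarith
    have ha : 0 ≤ (y - x) / (y - t) := by
      apply div_nonneg <;> linarith
    have hb : 0 ≤ (x - t) / (y - t) := by
      apply div_nonneg <;> linarith
    have hab : (y - x) / (y - t) + (x - t) / (y - t) = 1 := by
      field_simp
      ring
    have hcomb := hcc.2 (mem_Ioi.mpr ht0) (mem_Ioi.mpr hy0) ha hb hab
    have hpt : (y - x) / (y - t) * t + (x - t) / (y - t) * y = x := by
      field_simp
      ring
    simp only [smul_eq_mul] at hcomb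
    rw [hpt] at hcomb
    have : 0 ≤ (x - t) / (y - t) * ngPsi m y := mul_nonneg hb hy
    linarith
  have hlim : Tendsto (fun t => (y - x) / (y - t) * ngPsi m t) (𝓝[>] (0:ℝ))
      (𝓝 ((y - x) / (y - 0) * 0)) := by
    apply Tendsto.mul _ (ngPsi_tendsto_zero hm)
    have : ContinuousAt (fun t : ℝ => (y - x) / (y - t)) 0 :=
      (continuousAt_const.div (continuous_const.sub continuous_id).continuousAt
        (by simpa using hy0.ne'))
    exact this.tendsto.mono_left nhdsWithin_le_nhds
  rw [mul_zero] at hlim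
  exact le_of_tendsto hlim (by
    filter_upwards [Ioo_mem_nhdsGT_of_mem (by constructor <;> [rfl; exact hx] : (0:ℝ) ∈ Ico 0 x)]
      with t ht
    exact key t ht)

lemma ngF_continuous (m : ℕ) : Continuous (ngF m) := by
  unfold ngF
  fun_prop
lemma ngF_integrableOn {m : ℕ} (hm : 1 ≤ m) : IntegrableOn (ngF m) (Ioi 0) := by
  have hg := Real.GammaIntegral_convergent (s := (m:ℝ)) (by exact_mod_cast hm.trans_lt' zero_lt_one)
  have hc : (0:ℝ) < ((m-1).factorial : ℝ) := by exact_mod_cast (m-1).factorial_pos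
  apply Integrable.mono (hg.const_mul ((m:ℝ)^m / ((m-1).factorial : ℝ)))
    ((ngF_continuous m).aestronglyMeasurable.restrict)
  rw [ae_restrict_iff' measurableSet_Ioi]
  filter_upwards with t ht
  have ht : (0:ℝ) < t := ht
  have hm1 : (1:ℝ) ≤ (m:ℝ) := by exact_mod_cast hm
  have hexp : Real.exp (-(m:ℝ) * t) ≤ Real.exp (-t) := by
    apply Real.exp_le_exp.mpr
    nlinarith
  have hrpow : t ^ ((m:ℝ) - 1) = t ^ (m - 1) := by
    rw [show ((m:ℝ) - 1) = ((m - 1 : ℕ) : ℝ) by push_cast [Nat.cast_sub hm]; ring]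
    exact Real.rpow_natCast t (m-1)
  unfold ngF
  rw [Real.norm_eq_abs, Real.norm_eq_abs]
  have h1 : (0:ℝ) ≤ t ^ (m-1) := by positivity
  rw [abs_of_nonneg (by positivity), abs_of_nonneg (by positivity)]
  rw [hrpow]
  rw [div_le_iff₀ hc]
  have hrw : (m:ℝ)^m / ((m-1).factorial : ℝ) * (Real.exp (-t) * t^(m-1)) * ((m-1).factorial : ℝ)
      = (m:ℝ)^m * (Real.exp (-t) * t^(m-1)) := by field_simp
  rw [hrw]
  nlinarith [mul_le_mul_of_nonneg_left hexp (mul_nonneg (by positivity : (0:ℝ) ≤ (m:ℝ)^m) h1)]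
lemma ngF_integral_one {m : ℕ} (hm : 1 ≤ m) : ∫ t in Ioi (0:ℝ), ngF m t = 1 := by
  have hm0 : (0:ℝ) < (m:ℝ) := by exact_mod_cast hm.trans_lt' zero_lt_one
  have hI := Real.integral_rpow_mul_exp_neg_mul_Ioi (a := (m:ℝ)) (r := (m:ℝ)) hm0 hm0
  have hcongr : ∫ t in Ioi (0:ℝ), ngF m t
      = ∫ t in Ioi (0:ℝ), ((m:ℝ)^m / ((m-1).factorial : ℝ)) * (t ^ ((m:ℝ)-1) * Real.exp (-((m:ℝ)*t))) := by
    apply setIntegral_congr_fun measurableSet_Ioi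
    intro t ht
    have ht : (0:ℝ) < t := ht
    have hrpow : t ^ ((m:ℝ) - 1) = t ^ (m - 1) := by
      rw [show ((m:ℝ) - 1) = ((m - 1 : ℕ) : ℝ) by push_cast [Nat.cast_sub hm]; ring]
      exact Real.rpow_natCast t (m-1)
    unfold ngF
    dsimp only
    rw [hrpow]
    field_simp
  rw [hcongr, integral_const_mul, hI]
  have hGamma : Real.Gamma (m:ℝ) = ((m-1).factorial : ℝ) := by
    rw [show ((m:ℝ)) = ((m - 1 : ℕ) : ℝ) + 1 by push_cast [Nat.cast_sub hm]; ring]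
    exact Real.Gamma_nat_eq_factorial (m-1)
  rw [hGamma]
  have h2 : ((1:ℝ)/m) ^ ((m:ℝ)) = ((1:ℝ)/m)^(m:ℕ) := Real.rpow_natCast _ m
  rw [h2]
  have hfac : (0:ℝ) < ((m-1).factorial : ℝ) := by exact_mod_cast (m-1).factorial_pos
  field_simp
  rw [← mul_pow, mul_one_div_cancel hm0.ne', one_pow]
lemma ngIntegral_Ioo {m : ℕ} {x : ℝ} (hx : 0 ≤ x) :
    ∫ t in Ioo (0:ℝ) x, ngF m t = ∫ t in (0:ℝ)..x, ngF m t := by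
  rw [intervalIntegral.integral_of_le hx, ← integral_Ioc_eq_integral_Ioo]
lemma ngDeriv_F {m : ℕ} (x : ℝ) :
    HasDerivAt (fun y => ∫ t in (0:ℝ)..y, ngF m t) (ngF m x) x := by
  apply intervalIntegral.integral_hasDerivAt_right
    ((ngF_continuous m).intervalIntegrable 0 x)
    ((ngF_continuous m).stronglyMeasurableAtFilter _ _)
    (ngF_continuous m).continuousAt
lemma ngF_tendsto_one {m : ℕ} (hm : 1 ≤ m) :
    Tendsto (fun R => ∫ t in (0:ℝ)..R, ngF m t) atTop (𝓝 1) := by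
  have := intervalIntegral_tendsto_integral_Ioi 0 (ngF_integrableOn hm) tendsto_id
  rwa [ngF_integral_one hm] at this
lemma ngG_tendsto_one {m : ℕ} (hm : 1 ≤ m) : Tendsto (ngG m) atTop (𝓝 1) := by
  have hη := ngEta_pos hm
  have h1 : Tendsto (fun x : ℝ => -(ngEta m) * x) atTop atBot :=
    tendsto_id.const_mul_atTop_of_neg (by linarith)
  have h2 : Tendsto (fun x : ℝ => Real.exp (-(ngEta m) * x)) atTop (𝓝 0) :=
    Real.tendsto_exp_atBot.comp h1
  have h3 : Tendsto (fun x : ℝ => (1 - Real.exp (-(ngEta m) * x)) ^ m) atTop (𝓝 ((1 - 0)^m)) :=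
    ((tendsto_const_nhds.sub h2).pow m)
  rw [show ((1:ℝ)-0)^m = 1 by norm_num] at h3
  unfold ngG
  exact h3

lemma ngG_zero {m : ℕ} (hm : 1 ≤ m) : ngG m 0 = 0 := by
  unfold ngG
  rw [mul_zero, Real.exp_zero, sub_self, zero_pow (by omega)]
lemma ngDeriv_D {m : ℕ} (x : ℝ) :
    HasDerivAt (fun y => (∫ t in (0:ℝ)..y, ngF m t) - ngG m y) (ngF m x - ngGp m x) x :=
  (ngDeriv_F x).sub (ngDeriv_g x)
lemma ng_main_lower {m : ℕ} (hm : 1 ≤ m) {x : ℝ} (hx : 0 ≤ x) :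
    ngG m x ≤ ∫ t in Ioo (0:ℝ) x, ngF m t := by
  rcases hx.eq_or_lt with rfl | hx
  · rw [ngG_zero hm]
    simp
  set D := fun y => (∫ t in (0:ℝ)..y, ngF m t) - ngG m y with hD
  have hD0 : D 0 = 0 := by
    simp [hD, intervalIntegral.integral_same, ngG_zero hm]
  have hDcont : Continuous D :=
    continuous_iff_continuousAt.mpr fun y => (ngDeriv_D y).continuousAt
  have hgoal : 0 ≤ D x → ngG m x ≤ ∫ t in Ioo (0:ℝ) x, ngF m t := by
    intro h
    rw [ngIntegral_Ioo hx.le]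
    simp only [hD] at h
    linarith
  apply hgoal
  by_cases hcase : ∀ y ∈ Ioo (0:ℝ) x, 0 ≤ ngPsi m y
  · have hmono : MonotoneOn D (Icc 0 x) := by
      apply monotoneOn_of_deriv_nonneg (convex_Icc 0 x) (hDcont.continuousOn)
      · intro y hy
        exact (ngDeriv_D y).differentiableAt.differentiableWithinAt
      · intro y hy
        rw [interior_Icc] at hy
        rw [(ngDeriv_D y).deriv]
        have hψ := hcase y hy
        have hGp := ngGp_pos hm hy.1
        rw [ngF_eq_exp_psi_mul hm hy.1]
        nlinarith [Real.one_le_exp hψ]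
    have := hmono (left_mem_Icc.mpr hx.le) (right_mem_Icc.mpr hx.le) hx.le
    linarith [hD0 ▸ this]
  · push_neg at hcase
    obtain ⟨y₀, hy₀mem, hy₀⟩ := hcase
    have hanti : AntitoneOn D (Ici x) := by
      apply antitoneOn_of_deriv_nonpos (convex_Ici x) (hDcont.continuousOn)
      · intro y hy
        exact (ngDeriv_D y).differentiableAt.differentiableWithinAt
      · intro y hy
        rw [interior_Ici] at hy
        rw [(ngDeriv_D y).deriv]
        have hy0 : 0 < y := hx.trans hy
        have hψ : ngPsi m y < 0 := by
          by_contra hcon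
          push_neg at hcon
          exact absurd (ngPsi_crossing hm hy₀mem.1 (hy₀mem.2.trans hy) hcon) (not_le.mpr hy₀)
        have hGp := ngGp_pos hm hy0
        rw [ngF_eq_exp_psi_mul hm hy0]
        nlinarith [Real.exp_le_one_iff.mpr hψ.le]
    have hlim : Tendsto D atTop (𝓝 0) := by
      have := (ngF_tendsto_one (m := m) hm).sub (ngG_tendsto_one (m := m) hm)
      rwa [sub_self] at this
    apply le_of_tendsto hlim
    filter_upwards [eventually_ge_atTop x] with R hR
    exact hanti (self_mem_Ici) hR hR
lemma ng_main_upper {m : ℕ} (hm : 1 ≤ m) {x : ℝ} (hx : 0 ≤ x) :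
    ∫ t in Ici x, ngF m t ≤ 1 - ngG m x := by
  rcases hx.eq_or_lt with rfl | hx
  · rw [ngG_zero hm, integral_Ici_eq_integral_Ioi, ngF_integral_one hm]
    norm_num
  have hu : Ioo 0 x ∪ Ici x = Ioi 0 := Ioo_union_Ici_eq_Ioi hx
  have hdisj : Disjoint (Ioo (0:ℝ) x) (Ici x) :=
    (Iio_disjoint_Ici (le_refl x)).mono_left Ioo_subset_Iio_self
  have ii1 : IntegrableOn (ngF m) (Ioo 0 x) :=
    (ngF_integrableOn hm).mono_set Ioo_subset_Ioi_self
  have ii2 : IntegrableOn (ngF m) (Ici x) :=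
    (ngF_integrableOn hm).mono_set (by rw [← hu]; exact subset_union_right)
  have hsplit : (∫ t in Ioo (0:ℝ) x, ngF m t) + ∫ t in Ici x, ngF m t = 1 := by
    rw [← ngF_integral_one (m := m) hm, ← hu,
      setIntegral_union hdisj measurableSet_Ici ii1 ii2]
  have := ng_main_lower hm hx.le
  linarith

/-- Tight lower bound on the CDF of the normalized gamma distribution (shape `m`, rate `m`):
with `η = m (m!)^{-1/m}`, `(1 - e^{-ηx})^m ≤ P(h < x)`, equivalently
`P(h ≥ x) ≤ 1 - (1 - e^{-ηx})^m`, for all `x ≥ 0`. -/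
theorem normalized_gamma_cdf_bound (m : ℕ) (hm : 1 ≤ m) (x : ℝ) (hx : 0 ≤ x) :
    (1 - Real.exp (-((m : ℝ) * ((Nat.factorial m : ℝ) ^ (-(1 : ℝ) / m))) * x)) ^ m
        ≤ ∫ t in Set.Ioo (0 : ℝ) x,
            (m : ℝ) ^ m * t ^ (m - 1) * Real.exp (-(m : ℝ) * t) / (Nat.factorial (m - 1)) ∧
    ∫ t in Set.Ici x,
        (m : ℝ) ^ m * t ^ (m - 1) * Real.exp (-(m : ℝ) * t) / (Nat.factorial (m - 1))
      ≤ 1 - (1 - Real.exp (-((m : ℝ) * ((Nat.factorial m : ℝ) ^ (-(1 : ℝ) / m))) * x)) ^ m := by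
  exact ⟨ng_main_lower hm hx, ng_main_upper hm hx⟩
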